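/- arXiv:2504.01166 — 2 statements merged into one kernel-verified Lean document; each statement's English description precedes it below -/
import Mathlib

section
/- Let α > 0 and f the Manneville–Pomeau map of parameter α, with partition 𝒫 = {[0,x₁], (x₁,1]}. Then max over Q ∈ ⋁_{k=0}^{n−1} f^{−k}𝒫 of diam(Q) tends to 0 as n → ∞. In particular, f is topologically exact on (0,1]: for every x ∈ (0,1] and every neighborhood V of x in (0,1] there exists k ∈ ℕ with f^k(V) = (0,1]. -/
/-!
Both branches of `MP α` expand distances: by a factor `≥ 1` on `[0, x₁]` and by
`1 + x₁ ^ α > 1` on `(x₁, 1]`. An orbit that stays in `[0, x₁]` for `m` steps grows by at least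
`m δ^(1+α)` once it starts above `δ`, so long stays on the left happen only near the neutral fixed
point `0`. Hence a long itinerary either visits the right branch often, and uniform expansion
shrinks its cylinder, or contains a long left run, at whose start the two orbits are both `< ε`.

For exactness, the images of an interval stay intervals as long as they avoid straddling `x₁`;
if they never did, the interval would lie in one cylinder of every length, contradicting the first
part. Once an image straddles `x₁`, its right part maps onto some `(0, c]`, which grows under the
left branch until it passes `x₁`, after which one more step covers `(0, 1]`.
-/

open Real Set Filter Topology

/-- The Manneville–Pomeau map of parameter `α`. -/
noncomputable def MP (α : ℝ) : ℝ → ℝ := fun x =>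
  if x * (1 + x ^ α) ≤ 1 then x * (1 + x ^ α) else x * (1 + x ^ α) - 1

namespace MannevillePomeau

noncomputable def lift (α x : ℝ) : ℝ := x * (1 + x ^ α)

def branch (x₁ : ℝ) (b : Bool) : Set ℝ := if b then Ioc x₁ 1 else Icc 0 x₁

def cylinder (α x₁ : ℝ) (n : ℕ) (w : ℕ → Bool) : Set ℝ :=
  {z | z ∈ Icc 0 1 ∧ ∀ k < n, (MP α)^[k] z ∈ branch x₁ (w k)}

variable {α x₁ a b y y' z z' δ : ℝ}

lemma lift_sub_lift_ge (hα : 0 ≤ α) (ha : 0 ≤ a) (hab : a ≤ b) :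
    (b - a) * (1 + a ^ α) ≤ lift α b - lift α a := by
  have h := mul_le_mul_of_nonneg_left (rpow_le_rpow ha hab hα) (ha.trans hab)
  unfold lift
  nlinarith [rpow_nonneg ha α]

lemma lift_strictMonoOn (hα : 0 ≤ α) : StrictMonoOn (lift α) (Ici 0) := by
  intro a ha b _ hab
  nlinarith [lift_sub_lift_ge hα ha hab.le, rpow_nonneg (show (0:ℝ) ≤ a from ha) α]

lemma continuous_lift (hα : 0 ≤ α) : Continuous (lift α) :=
  continuous_id.mul (continuous_const.add (continuous_id.rpow_const fun _ => Or.inr hα))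

lemma lift_zero : lift α 0 = 0 := zero_mul _

lemma add_mul_le_lift (hα : 0 ≤ α) (hδ : 0 ≤ δ) (hz : δ ≤ z) : z + δ * δ ^ α ≤ lift α z := by
  have := mul_le_mul hz (rpow_le_rpow hδ hz hα) (rpow_nonneg hδ α) (hδ.trans hz)
  unfold lift
  linarith

lemma lift_le_one (hα : 0 ≤ α) (hfix : lift α x₁ = 1) (h0 : 0 ≤ z) (h : z ≤ x₁) :
    lift α z ≤ 1 :=
  hfix ▸ (lift_strictMonoOn hα).monotoneOn h0 (h0.trans h) h

lemma one_lt_lift (hα : 0 ≤ α) (hx₁ : 0 ≤ x₁) (hfix : lift α x₁ = 1) (h : x₁ < z) :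
    1 < lift α z :=
  hfix ▸ lift_strictMonoOn hα hx₁ (hx₁.trans h.le) h

lemma lift_le_two (hα : 0 ≤ α) (h0 : 0 ≤ z) (h1 : z ≤ 1) : lift α z ≤ 2 := by
  have : lift α 1 = 2 := by norm_num [lift]
  exact this ▸ (lift_strictMonoOn hα).monotoneOn h0 (zero_le_one' ℝ) h1

lemma MP_eq_lift (hα : 0 ≤ α) (hfix : lift α x₁ = 1) (h0 : 0 ≤ z) (h : z ≤ x₁) :
    MP α z = lift α z :=
  if_pos (lift_le_one hα hfix h0 h)

lemma MP_eq_lift_sub_one (hα : 0 ≤ α) (hx₁ : 0 ≤ x₁) (hfix : lift α x₁ = 1) (h : x₁ < z) :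
    MP α z = lift α z - 1 :=
  if_neg (one_lt_lift hα hx₁ hfix h).not_ge

lemma MP_zero : MP α 0 = 0 := by
  simp [MP]

lemma mapsTo_MP_Ioc (hα : 0 ≤ α) (hx₁ : 0 ≤ x₁) (hfix : lift α x₁ = 1) :
    MapsTo (MP α) (Ioc 0 1) (Ioc 0 1) := by
  intro z hz
  rcases le_or_gt z x₁ with h | h
  · rw [MP_eq_lift hα hfix hz.1.le h]
    exact ⟨lift_zero (α := α) ▸ lift_strictMonoOn hα self_mem_Ici hz.1.le hz.1,
      lift_le_one hα hfix hz.1.le h⟩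
  · rw [MP_eq_lift_sub_one hα hx₁ hfix h]
    constructor <;> linarith [one_lt_lift hα hx₁ hfix h, lift_le_two hα hz.1.le hz.2]

lemma mapsTo_MP_Icc (hα : 0 ≤ α) (hx₁ : 0 ≤ x₁) (hfix : lift α x₁ = 1) :
    MapsTo (MP α) (Icc 0 1) (Icc 0 1) := by
  intro z hz
  rcases hz.1.eq_or_lt with rfl | h
  · simp [MP_zero]
  · exact Ioc_subset_Icc_self (mapsTo_MP_Ioc hα hx₁ hfix ⟨h, hz.2⟩)

lemma mul_dist_le_dist_of_mul_sub_le {S : Set ℝ} {f : ℝ → ℝ} {c : ℝ} (hc : 0 ≤ c)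
    (hf : ∀ a ∈ S, ∀ b ∈ S, a ≤ b → c * (b - a) ≤ f b - f a) (ha : a ∈ S) (hb : b ∈ S) :
    c * dist a b ≤ dist (f a) (f b) := by
  wlog hab : a ≤ b generalizing a b
  · rw [dist_comm, dist_comm (f a)]
    exact this hb ha (le_of_not_ge hab)
  have h := hf a ha b hb hab
  rw [dist_comm, dist_comm (f a), Real.dist_eq, Real.dist_eq, abs_of_nonneg (sub_nonneg.2 hab),
    abs_of_nonneg (by nlinarith)]
  exact h

lemma pow_toNat_mul_dist_le_dist_MP (hα : 0 ≤ α) (hx₁ : 0 ≤ x₁) (hfix : lift α x₁ = 1)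
    {s : Bool} (hy : y ∈ branch x₁ s) (hy' : y' ∈ branch x₁ s) :
    (1 + x₁ ^ α) ^ s.toNat * dist y y' ≤ dist (MP α y) (MP α y') := by
  cases s <;> simp only [branch, Bool.false_eq_true, if_false, if_true] at hy hy'
  · have hf : ∀ a ∈ Icc 0 x₁, ∀ b ∈ Icc 0 x₁, a ≤ b → 1 * (b - a) ≤ MP α b - MP α a := by
      intro a ha b hb hab
      rw [MP_eq_lift hα hfix ha.1 ha.2, MP_eq_lift hα hfix hb.1 hb.2]
      nlinarith [lift_sub_lift_ge hα ha.1 hab, rpow_nonneg ha.1 α]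
    simpa using mul_dist_le_dist_of_mul_sub_le zero_le_one hf hy hy'
  · have hf : ∀ a ∈ Ioc x₁ 1, ∀ b ∈ Ioc x₁ 1, a ≤ b →
        (1 + x₁ ^ α) * (b - a) ≤ MP α b - MP α a := by
      intro a ha b hb hab
      rw [MP_eq_lift_sub_one hα hx₁ hfix ha.1, MP_eq_lift_sub_one hα hx₁ hfix hb.1]
      nlinarith [lift_sub_lift_ge hα (hx₁.trans ha.1.le) hab, rpow_le_rpow hx₁ ha.1.le hα]
    simpa using mul_dist_le_dist_of_mul_sub_le (by positivity) hf hy hy'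

open Finset in
lemma pow_sum_toNat_mul_dist_le_dist_iterate (hα : 0 ≤ α) (hx₁ : 0 ≤ x₁)
    (hfix : lift α x₁ = 1) {w : ℕ → Bool} {n : ℕ}
    (hz : ∀ k < n, (MP α)^[k] z ∈ branch x₁ (w k))
    (hz' : ∀ k < n, (MP α)^[k] z' ∈ branch x₁ (w k)) :
    (1 + x₁ ^ α) ^ (∑ k ∈ range n, (w k).toNat) * dist z z' ≤
      dist ((MP α)^[n] z) ((MP α)^[n] z') := by
  induction n with
  | zero => simp
  | succ n ih =>
    have ih := ih (fun k hk => hz k (hk.trans n.lt_succ_self))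
      (fun k hk => hz' k (hk.trans n.lt_succ_self))
    rw [sum_range_succ, pow_add, Function.iterate_succ_apply', Function.iterate_succ_apply']
    calc _ = (1 + x₁ ^ α) ^ (w n).toNat * ((1 + x₁ ^ α) ^ (∑ k ∈ range n, (w k).toNat) *
          dist z z') := by ring
      _ ≤ (1 + x₁ ^ α) ^ (w n).toNat * dist ((MP α)^[n] z) ((MP α)^[n] z') :=
          mul_le_mul_of_nonneg_left ih (by positivity)
      _ ≤ _ := pow_toNat_mul_dist_le_dist_MP hα hx₁ hfix (hz n n.lt_succ_self)
          (hz' n n.lt_succ_self)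

lemma add_mul_le_iterate (hα : 0 ≤ α) (hfix : lift α x₁ = 1) (hδ : 0 ≤ δ) (hz : δ ≤ z)
    {m : ℕ} (h : ∀ j < m, (MP α)^[j] z ∈ Icc 0 x₁) :
    z + m * (δ * δ ^ α) ≤ (MP α)^[m] z := by
  induction m with
  | zero => simp
  | succ m ih =>
    have ih := ih (fun j hj => h j (hj.trans m.lt_succ_self))
    have hm := h m m.lt_succ_self
    have hδα : 0 ≤ δ * δ ^ α := mul_nonneg hδ (rpow_nonneg hδ α)
    rw [Function.iterate_succ_apply', MP_eq_lift hα hfix hm.1 hm.2]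
    have := add_mul_le_lift hα hδ (show δ ≤ (MP α)^[m] z by nlinarith [m.cast_nonneg (α := ℝ)])
    push_cast
    linarith

lemma exists_forall_lt_of_iterate_mem_Icc (hα : 0 ≤ α) (hfix : lift α x₁ = 1) (hδ : 0 < δ) :
    ∃ m : ℕ, ∀ z, (∀ j < m, (MP α)^[j] z ∈ Icc 0 x₁) → z < δ := by
  have hδα : 0 < δ * δ ^ α := mul_pos hδ (rpow_pos_of_pos hδ α)
  obtain ⟨m, hm⟩ := exists_nat_gt (x₁ / (δ * δ ^ α))
  refine ⟨m + 1, fun z h => ?_⟩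
  by_contra! hz
  have hmz := add_mul_le_iterate hα hfix hδ.le hz (fun j hj => h j (hj.trans m.lt_succ_self))
  have hle := (h m m.lt_succ_self).2
  rw [div_lt_iff₀ hδα] at hm
  linarith

open Finset in
lemma exists_run_false_or_le_sum_toNat (w : ℕ → Bool) (L : ℕ) : ∀ B : ℕ,
    (∃ k, k + L ≤ L * B ∧ ∀ j < L, w (k + j) = false) ∨ B ≤ ∑ k ∈ range (L * B), (w k).toNat
  | 0 => Or.inr le_rfl
  | B + 1 => by
    rcases exists_run_false_or_le_sum_toNat w L B with ⟨k, hk, hrun⟩ | hB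
    · exact Or.inl ⟨k, hk.trans (Nat.mul_le_mul_left L B.le_succ), hrun⟩
    by_cases hblock : ∀ j < L, w (L * B + j) = false
    · exact Or.inl ⟨L * B, (mul_add_one L B).ge, hblock⟩
    push Not at hblock
    obtain ⟨j, hj, hwj⟩ := hblock
    have h1 : 1 ≤ ∑ i ∈ range L, (w (L * B + i)).toNat := by
      simpa [hwj] using single_le_sum (f := fun i => (w (L * B + i)).toNat)
        (fun _ _ => Nat.zero_le _) (mem_range.2 hj)
    right
    rw [mul_add_one, sum_range_add]
    omega

open Finset in
lemma exists_forall_diam_cylinder_le (hα : 0 ≤ α) (hx₁ : 0 < x₁) (hfix : lift α x₁ = 1)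
    {ε : ℝ} (hε : 0 < ε) : ∃ N, ∀ n ≥ N, ∀ w, Metric.diam (cylinder α x₁ n w) ≤ ε := by
  have hlam : 1 < 1 + x₁ ^ α := lt_add_of_pos_right 1 (rpow_pos_of_pos hx₁ α)
  obtain ⟨L, hL⟩ := exists_forall_lt_of_iterate_mem_Icc hα hfix hε
  obtain ⟨B, hB⟩ := pow_unbounded_of_one_lt (1 / ε) hlam
  rw [div_lt_iff₀ hε] at hB
  refine ⟨L * B, fun n hn w => Metric.diam_le_of_forall_dist_le hε.le ?_⟩
  rintro z ⟨hz, hzw⟩ z' ⟨hz', hzw'⟩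
  have hexp := fun m (hm : m ≤ n) => pow_sum_toNat_mul_dist_le_dist_iterate hα hx₁.le hfix
    (fun k hk => hzw k (hk.trans_le hm)) (fun k hk => hzw' k (hk.trans_le hm))
  rcases exists_run_false_or_le_sum_toNat w L B with ⟨k, hk, hrun⟩ | hcount
  · have hsmall : ∀ y, (∀ j < n, (MP α)^[j] y ∈ branch x₁ (w j)) → (MP α)^[k] y < ε := by
      intro y hy
      refine hL _ fun j hj => ?_
      rw [← Function.iterate_add_apply, add_comm]
      simpa [branch, hrun j hj] using hy (k + j) (by omega)
    have hz0 := (mapsTo_MP_Icc hα hx₁.le hfix).iterate k hz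
    have hz0' := (mapsTo_MP_Icc hα hx₁.le hfix).iterate k hz'
    calc dist z z' ≤ (1 + x₁ ^ α) ^ (∑ j ∈ range k, (w j).toNat) * dist z z' :=
          le_mul_of_one_le_left dist_nonneg (one_le_pow₀ hlam.le)
      _ ≤ dist ((MP α)^[k] z) ((MP α)^[k] z') := hexp k (by omega)
      _ ≤ ε := by
          simpa using Real.dist_le_of_mem_Icc (y' := ε) ⟨hz0.1, (hsmall z hzw).le⟩
            ⟨hz0'.1, (hsmall z' hzw').le⟩
  · have hzn := (mapsTo_MP_Icc hα hx₁.le hfix).iterate n hz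
    have hzn' := (mapsTo_MP_Icc hα hx₁.le hfix).iterate n hz'
    have hdist := Real.dist_le_of_mem_Icc_01 hzn hzn'
    have hpow : (1 + x₁ ^ α) ^ B ≤ (1 + x₁ ^ α) ^ (∑ j ∈ range n, (w j).toNat) :=
      pow_le_pow_right₀ hlam.le (hcount.trans
        (sum_le_sum_of_subset (range_subset_range.2 hn)))
    nlinarith [hexp n le_rfl, mul_le_mul_of_nonneg_right hpow (dist_nonneg (x := z) (y := z'))]

lemma MP_image_Ioc_of_le (hα : 0 ≤ α) (hfix : lift α x₁ = 1) (ha : 0 ≤ a) (hab : a ≤ b)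
    (hb : b ≤ x₁) : MP α '' Ioc a b = Ioc (lift α a) (lift α b) := by
  have heq : EqOn (MP α) (lift α) (Ioc a b) := fun y hy =>
    MP_eq_lift hα hfix (ha.trans hy.1.le) (hy.2.trans hb)
  rw [heq.image_eq]
  exact (continuous_lift hα).continuousOn.image_Ioc_of_strictMonoOn hab
    ((lift_strictMonoOn hα).mono fun y hy => ha.trans hy.1)

lemma MP_image_Ioc_of_ge (hα : 0 ≤ α) (hx₁ : 0 ≤ x₁) (hfix : lift α x₁ = 1) (ha : x₁ ≤ a)
    (hab : a ≤ b) : MP α '' Ioc a b = Ioc (lift α a - 1) (lift α b - 1) := by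
  have heq : EqOn (MP α) (fun y => lift α y - 1) (Ioc a b) := fun y hy =>
    MP_eq_lift_sub_one hα hx₁ hfix (ha.trans_lt hy.1)
  rw [heq.image_eq]
  refine ((continuous_lift hα).sub continuous_const).continuousOn.image_Ioc_of_strictMonoOn hab
    fun y hy y' hy' h => sub_lt_sub_right ?_ 1
  exact lift_strictMonoOn hα (hx₁.trans (ha.trans hy.1)) (hx₁.trans (ha.trans hy'.1)) h

lemma exists_MP_image_Ioc_eq_Ioc (hα : 0 ≤ α) (hx₁ : 0 ≤ x₁) (hfix : lift α x₁ = 1)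
    (ha : 0 ≤ a) (hab : a ≤ b) (hb : b ≤ 1) (hsplit : ¬(a < x₁ ∧ x₁ < b)) :
    ∃ a' b', 0 ≤ a' ∧ a' ≤ b' ∧ b' ≤ 1 ∧ MP α '' Ioc a b = Ioc a' b' := by
  have hmono := (lift_strictMonoOn hα).monotoneOn ha (ha.trans hab) hab
  rcases le_or_gt b x₁ with hbx | hxb
  · refine ⟨_, _, ?_, hmono, lift_le_one hα hfix (ha.trans hab) hbx,
      MP_image_Ioc_of_le hα hfix ha hab hbx⟩
    exact lift_zero (α := α) ▸ (lift_strictMonoOn hα).monotoneOn self_mem_Ici ha ha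
  · have hxa : x₁ ≤ a := not_lt.1 fun h => hsplit ⟨h, hxb⟩
    refine ⟨_, _, ?_, by linarith, by linarith [lift_le_two hα (ha.trans hab) hb],
      MP_image_Ioc_of_ge hα hx₁ hfix hxa hab⟩
    linarith [hfix ▸ (lift_strictMonoOn hα).monotoneOn hx₁ ha hxa]

lemma mem_branch_decide_of_mem_Ioc (ha : 0 ≤ a) (hb : b ≤ 1) (hsplit : ¬(a < x₁ ∧ x₁ < b))
    (hy : y ∈ Ioc a b) (hy' : y' ∈ Ioc a b) : y' ∈ branch x₁ (decide (x₁ < y)) := by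
  rcases le_or_gt b x₁ with hbx | hxb
  · rw [decide_eq_false (hy.2.trans hbx).not_gt]
    exact ⟨ha.trans hy'.1.le, hy'.2.trans hbx⟩
  · have hxa : x₁ ≤ a := not_lt.1 fun h => hsplit ⟨h, hxb⟩
    rw [decide_eq_true (hxa.trans_lt hy.1)]
    exact ⟨hxa.trans_lt hy'.1, hy'.2.trans hb⟩

lemma exists_iterate_image_Ioc_straddle (hα : 0 ≤ α) (hx₁ : 0 < x₁) (hfix : lift α x₁ = 1)
    {u v : ℝ} (hu : 0 ≤ u) (huv : u < v) (hv : v ≤ 1) :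
    ∃ k a b, a < x₁ ∧ x₁ < b ∧ b ≤ 1 ∧ (MP α)^[k] '' Ioc u v = Ioc a b := by
  by_contra! hnot
  have himage : ∀ k, ∃ a b, 0 ≤ a ∧ b ≤ 1 ∧ ¬(a < x₁ ∧ x₁ < b) ∧
      (MP α)^[k] '' Ioc u v = Ioc a b := by
    intro k
    induction k with
    | zero => exact ⟨u, v, hu, hv, fun h => hnot 0 u v h.1 h.2 hv (by simp), by simp⟩
    | succ k ih =>
      obtain ⟨a, b, ha, hb, hsplit, him⟩ := ih
      have hab : a ≤ b := (nonempty_Ioc.1 (him ▸ (nonempty_Ioc.2 huv).image _)).le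
      obtain ⟨a', b', ha', -, hb', him'⟩ :=
        exists_MP_image_Ioc_eq_Ioc hα hx₁.le hfix ha hab hb hsplit
      have him_succ : (MP α)^[k + 1] '' Ioc u v = Ioc a' b' := by
        rw [Function.iterate_succ', image_comp, him, him']
      exact ⟨a', b', ha', hb', fun h => hnot (k + 1) a' b' h.1 h.2 hb' him_succ, him_succ⟩
  have hsub : ∀ N, Ioc u v ⊆ cylinder α x₁ N fun k => decide (x₁ < (MP α)^[k] v) := by
    refine fun N y hy => ⟨⟨hu.trans hy.1.le, hy.2.trans hv⟩, fun k _ => ?_⟩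
    obtain ⟨a, b, ha, hb, hsplit, him⟩ := himage k
    exact mem_branch_decide_of_mem_Ioc ha hb hsplit (him ▸ mem_image_of_mem _ ⟨huv, le_rfl⟩)
      (him ▸ mem_image_of_mem _ hy)
  obtain ⟨N, hN⟩ := exists_forall_diam_cylinder_le hα hx₁ hfix (half_pos (sub_pos.2 huv))
  have hdiam := (Metric.diam_mono (hsub N) ((Metric.isBounded_Icc (0:ℝ) 1).subset
    fun y hy => hy.1)).trans (hN N le_rfl _)
  rw [Real.diam_Ioc huv.le] at hdiam
  linarith

lemma iterate_image_Ioc_zero (hα : 0 ≤ α) (hfix : lift α x₁ = 1) {c : ℝ} {m : ℕ}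
    (h : ∀ i < m, (MP α)^[i] c ∈ Icc 0 x₁) : (MP α)^[m] '' Ioc 0 c = Ioc 0 ((MP α)^[m] c) := by
  induction m with
  | zero => simp
  | succ m ih =>
    have hm := h m m.lt_succ_self
    rw [Function.iterate_succ', image_comp, ih fun i hi => h i (hi.trans m.lt_succ_self),
      MP_image_Ioc_of_le hα hfix le_rfl hm.1 hm.2, lift_zero, Function.comp_apply,
      MP_eq_lift hα hfix hm.1 hm.2]

lemma exists_iterate_image_Ioc_zero_superset (hα : 0 ≤ α) (hx₁ : 0 ≤ x₁)
    (hfix : lift α x₁ = 1) {c : ℝ} (hc : c ∈ Ioc 0 1) :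
    ∃ k, Ioc 0 1 ⊆ (MP α)^[k] '' Ioc 0 c := by
  have horbit : ∀ j, (MP α)^[j] c ∈ Icc 0 1 :=
    fun j => (mapsTo_MP_Icc hα hx₁ hfix).iterate j (Ioc_subset_Icc_self hc)
  have hex : ∃ j, x₁ < (MP α)^[j] c := by
    obtain ⟨m, hm⟩ := exists_forall_lt_of_iterate_mem_Icc hα hfix hc.1
    by_contra! h
    exact lt_irrefl c (hm c fun j _ => ⟨(horbit j).1, h j⟩)
  classical
  have hleft : ∀ i < Nat.find hex, (MP α)^[i] c ∈ Icc 0 x₁ :=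
    fun i hi => ⟨(horbit i).1, not_lt.1 (Nat.find_min hex hi)⟩
  refine ⟨Nat.find hex + 1, ?_⟩
  rw [Function.iterate_succ', image_comp, iterate_image_Ioc_zero hα hfix hleft]
  calc Ioc 0 1 = MP α '' Ioc 0 x₁ := by
        rw [MP_image_Ioc_of_le hα hfix le_rfl hx₁ le_rfl, lift_zero, hfix]
    _ ⊆ _ := image_mono (Ioc_subset_Ioc_right (Nat.find_spec hex).le)

lemma exists_iterate_image_Ioc_superset (hα : 0 ≤ α) (hx₁ : 0 < x₁) (hfix : lift α x₁ = 1)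
    {u v : ℝ} (hu : 0 ≤ u) (huv : u < v) (hv : v ≤ 1) :
    ∃ k, Ioc 0 1 ⊆ (MP α)^[k] '' Ioc u v := by
  obtain ⟨k, a, b, hax, hxb, hb, him⟩ := exists_iterate_image_Ioc_straddle hα hx₁ hfix hu huv hv
  have hc : lift α b - 1 ∈ Ioc 0 1 := ⟨by linarith [one_lt_lift hα hx₁.le hfix hxb],
    by linarith [lift_le_two hα (hx₁.le.trans hxb.le) hb]⟩
  obtain ⟨j, hj⟩ := exists_iterate_image_Ioc_zero_superset hα hx₁.le hfix hc
  refine ⟨j + 1 + k, hj.trans ?_⟩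
  rw [Function.iterate_add, image_comp, him, Function.iterate_succ, image_comp]
  refine image_mono ?_
  calc Ioc 0 (lift α b - 1) = MP α '' Ioc x₁ b := by
        rw [MP_image_Ioc_of_ge hα hx₁.le hfix le_rfl hxb.le, hfix, sub_self]
    _ ⊆ MP α '' Ioc a b := image_mono (Ioc_subset_Ioc_left hax.le)

end MannevillePomeau

open MannevillePomeau in
theorem stmt11 (α : ℝ) (hα : 0 < α) (x₁ : ℝ) (hx₁ : x₁ ∈ Set.Ioo (0:ℝ) 1)
    (hfix : x₁ * (1 + x₁ ^ α) = 1) :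
    (∀ ε > (0:ℝ), ∃ N : ℕ, ∀ n ≥ N, ∀ w : ℕ → Bool,
      Metric.diam {z | z ∈ Set.Icc (0:ℝ) 1 ∧ ∀ k < n,
        (MP α)^[k] z ∈ (if w k then Set.Ioc x₁ 1 else Set.Icc 0 x₁)} ≤ ε) ∧
    (∀ z ∈ Set.Ioc (0:ℝ) 1, ∀ ε > (0:ℝ), ∃ k : ℕ,
      (MP α)^[k] '' (Set.Ioc 0 1 ∩ Metric.ball z ε) = Set.Ioc 0 1) := by
  refine ⟨fun ε hε => exists_forall_diam_cylinder_le hα.le hx₁.1 hfix hε, fun z hz ε hε => ?_⟩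
  have hu := le_max_left 0 (z - ε / 2)
  have hu' := le_max_right 0 (z - ε / 2)
  obtain ⟨k, hk⟩ := exists_iterate_image_Ioc_superset hα.le hx₁.1 hfix hu
    (max_lt hz.1 (by linarith)) hz.2
  have hball : Ioc (max 0 (z - ε / 2)) z ⊆ Ioc 0 1 ∩ Metric.ball z ε := fun t ht =>
    ⟨⟨hu.trans_lt ht.1, ht.2.trans hz.2⟩, by
      rw [Metric.mem_ball, Real.dist_eq, abs_lt]
      constructor <;> linarith [ht.1, ht.2]⟩
  exact ⟨k, (((mapsTo_MP_Ioc hα.le hx₁.1.le hfix).iterate k).mono_left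
    inter_subset_left).image_subset.antisymm (hk.trans (image_mono hball))⟩
end

section
/- Let α > 0, γ > α, and let ω_γ(x) = −x^γ on [0,1]. Then for every β > 0, the series Σ_{n≥1} exp(β S_n ω_γ(y_n)) diverges to +∞, where y_n ∈ (x₁,1] is the unique point with f(y_n) = x_{n−1} and S_n is the Birkhoff sum for the Manneville–Pomeau map f of parameter α. Consequently (via the Bowen-type formula), ω_γ has no phase transition in temperature when γ > α. -/
open Real Set Filter Topology

/-!
Along the backward orbit `x (n+1) * (1 + x (n+1) ^ α) = x n` of `1`, the quantity `x n ^ (-α)`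
increases by at least `c = min α 1 / 2` at each step, so `x n ^ γ ≤ (c n) ^ (-γ/α)` is summable
when `γ > α`. The orbit of `y n` visits `x (n-1), …, x 0` after leaving `y n ≤ 1`, so every
Birkhoff sum `S_n ω_γ (y n)` is bounded below by `-(1 + ∑ x k ^ γ)`, and the terms of the series
are bounded away from `0`.
-/

lemma one_add_rpow_neg_le {α t : ℝ} (hα : 0 < α) (ht0 : 0 ≤ t) (ht1 : t ≤ 1) :
    (1 + t) ^ (-α) ≤ 1 - min α 1 / 2 * t := by
  set m := min α 1
  have hm0 : 0 < m := lt_min hα one_pos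
  have h1t : 0 < 1 + t := by linarith
  have hinv : (1 + t)⁻¹ ≤ 1 - t / 2 := by
    rw [inv_le_iff_one_le_mul₀ h1t]
    nlinarith
  calc (1 + t) ^ (-α) ≤ (1 + t) ^ (-m) :=
        rpow_le_rpow_of_exponent_le (by linarith) (neg_le_neg (min_le_left _ _))
    _ = (1 + t)⁻¹ ^ m := by rw [rpow_neg h1t.le, inv_rpow h1t.le]
    _ ≤ (1 - t / 2) ^ m := rpow_le_rpow (by positivity) hinv hm0.le
    _ ≤ 1 + m * -(t / 2) :=
        rpow_one_add_le_one_add_mul_self (by linarith) hm0.le (min_le_right _ _)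
    _ = 1 - m / 2 * t := by ring

lemma mul_one_add_rpow_rpow_neg_add_le {α z : ℝ} (hα : 0 < α) (hz0 : 0 < z) (hz1 : z ≤ 1) :
    (z * (1 + z ^ α)) ^ (-α) + min α 1 / 2 ≤ z ^ (-α) := by
  have hzα : 0 < z ^ α := rpow_pos_of_pos hz0 α
  have hcancel : z ^ (-α) * z ^ α = 1 := by rw [← rpow_add hz0]; simp
  calc (z * (1 + z ^ α)) ^ (-α) + min α 1 / 2
      = z ^ (-α) * (1 + z ^ α) ^ (-α) + min α 1 / 2 := by
        rw [mul_rpow hz0.le (by positivity)]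
    _ ≤ z ^ (-α) * (1 - min α 1 / 2 * z ^ α) + min α 1 / 2 := by
        gcongr
        exact one_add_rpow_neg_le hα hzα.le (rpow_le_one hz0.le hz1 hα.le)
    _ = z ^ (-α) := by linear_combination (-(min α 1) / 2) * hcancel

lemma MP_eq_of_lt_MP {α z : ℝ} (hα : 0 < α) (hz0 : 0 ≤ z) (hz1 : z < 1) (hz : z < MP α z) :
    MP α z = z * (1 + z ^ α) := by
  unfold MP at hz ⊢
  split_ifs at hz ⊢ with hc
  · rfl
  · -- on the right branch `MP α z < 2 * z - 1 < z`
    have : z ^ α < 1 := rpow_lt_one hz0 hz1 hα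
    nlinarith

section BackwardOrbit

variable {α : ℝ} {x : ℕ → ℝ}

lemma backward_orbit_le_one (hx0 : x 0 = 1)
    (hx : ∀ n, x (n + 1) ∈ Ioo 0 (x n) ∧ MP α (x (n + 1)) = x n) (n : ℕ) : x n ≤ 1 := by
  induction n with
  | zero => exact hx0.le
  | succ k ih => exact (hx k).1.2.le.trans ih

lemma backward_orbit_succ_mul (hα : 0 < α) (hx0 : x 0 = 1)
    (hx : ∀ n, x (n + 1) ∈ Ioo 0 (x n) ∧ MP α (x (n + 1)) = x n) (n : ℕ) :
    x (n + 1) * (1 + x (n + 1) ^ α) = x n := by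
  obtain ⟨⟨hpos, hlt⟩, hmap⟩ := hx n
  rw [← MP_eq_of_lt_MP hα hpos.le (hlt.trans_le (backward_orbit_le_one hx0 hx n)) (hmap ▸ hlt),
    hmap]

lemma mul_natCast_le_backward_orbit_rpow_neg (hα : 0 < α) (hx0 : x 0 = 1)
    (hx : ∀ n, x (n + 1) ∈ Ioo 0 (x n) ∧ MP α (x (n + 1)) = x n) (n : ℕ) :
    min α 1 / 2 * n ≤ x n ^ (-α) := by
  induction n with
  | zero => simp [hx0]
  | succ k ih =>
    have hstep := mul_one_add_rpow_rpow_neg_add_le hα (hx k).1.1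
      (backward_orbit_le_one hx0 hx (k + 1))
    rw [backward_orbit_succ_mul hα hx0 hx k] at hstep
    push_cast
    linarith

lemma summable_backward_orbit_rpow {γ : ℝ} (hα : 0 < α) (hγ : α < γ) (hx0 : x 0 = 1)
    (hx : ∀ n, x (n + 1) ∈ Ioo 0 (x n) ∧ MP α (x (n + 1)) = x n) :
    Summable fun n => x (n + 1) ^ γ := by
  set c := min α 1 / 2
  have hc : 0 < c := half_pos (lt_min hα one_pos)
  have hmajorant : Summable fun n : ℕ => c ^ (-(γ / α)) * ((n + 1 : ℕ) : ℝ) ^ (-(γ / α)) := by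
    refine Summable.mul_left _ ((summable_nat_add_iff 1).2 (summable_nat_rpow.2 ?_))
    linarith [(one_lt_div hα).2 hγ]
  refine hmajorant.of_nonneg_of_le (fun n => rpow_nonneg (hx n).1.1.le _) fun n => ?_
  have hpos := (hx n).1.1
  have hcn : 0 < c * ((n + 1 : ℕ) : ℝ) := by positivity
  calc x (n + 1) ^ γ = (x (n + 1) ^ (-α)) ^ (-(γ / α)) := by
        rw [← rpow_mul hpos.le]; congr 1; field_simp
    _ ≤ (c * ((n + 1 : ℕ) : ℝ)) ^ (-(γ / α)) :=
        rpow_le_rpow_of_nonpos hcn (mul_natCast_le_backward_orbit_rpow_neg hα hx0 hx _)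
          (neg_nonpos.2 (div_pos (hα.trans hγ) hα).le)
    _ = c ^ (-(γ / α)) * ((n + 1 : ℕ) : ℝ) ^ (-(γ / α)) := mul_rpow hc.le (by positivity)

end BackwardOrbit

lemma iterate_succ_eq_of_backward_orbit {β : Type*} {f : β → β} {x : ℕ → β}
    (hx : ∀ k, f (x (k + 1)) = x k) {y : β} {m : ℕ} (hy : f y = x m) {j : ℕ} (hj : j ≤ m) :
    f^[j + 1] y = x (m - j) := by
  induction j with
  | zero => simpa using hy
  | succ j ih =>
    rw [Function.iterate_succ_apply', ih (by omega), ← hx (m - (j + 1))]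
    congr 2
    omega

lemma birkhoff_sum_eq_of_backward_orbit {β M : Type*} [AddCommMonoid M] {f : β → β}
    {x : ℕ → β} (hx : ∀ k, f (x (k + 1)) = x k) {y : β} {m : ℕ} (hy : f y = x m) (g : β → M) :
    ∑ j ∈ Finset.range (m + 1), g (f^[j] y) = g y + ∑ k ∈ Finset.range m, g (x (k + 1)) := by
  rw [Finset.sum_range_succ', add_comm, Function.iterate_zero_apply, ← Finset.sum_range_reflect]
  congr 1
  refine Finset.sum_congr rfl fun j hj => ?_
  rw [Finset.mem_range] at hj
  rw [iterate_succ_eq_of_backward_orbit hx hy (by omega)]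
  congr 2
  omega

lemma tendsto_sum_Icc_atTop_of_le {a : ℕ → ℝ} {ε : ℝ} (hε : 0 < ε)
    (ha : ∀ n, 1 ≤ n → ε ≤ a n) :
    Tendsto (fun N => ∑ n ∈ Finset.Icc 1 N, a n) atTop atTop := by
  refine tendsto_atTop_mono (fun N => ?_) (tendsto_natCast_atTop_atTop.atTop_mul_const hε)
  simpa using Finset.card_nsmul_le_sum (Finset.Icc 1 N) a ε fun n hn => ha n (Finset.mem_Icc.1 hn).1

theorem stmt13_general (α γ : ℝ) (hα : 0 < α) (hγ : α < γ)
    (x₁ : ℝ) (hx₁ : x₁ ∈ Set.Ioo (0:ℝ) 1)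
    (x : ℕ → ℝ) (hx0 : x 0 = 1)
    (hx : ∀ n, x (n+1) ∈ Set.Ioo (0:ℝ) (x n) ∧ MP α (x (n+1)) = x n)
    (y : ℕ → ℝ)
    (hy : ∀ n : ℕ, 1 ≤ n → y n ∈ Set.Ioc x₁ 1 ∧ MP α (y n) = x (n-1)) :
    ∀ β > (0:ℝ),
      Filter.Tendsto (fun N : ℕ => ∑ n ∈ Finset.Icc 1 N,
          Real.exp (β * ∑ j ∈ Finset.range n, (-(((MP α)^[j] (y n)) ^ γ))))
        Filter.atTop Filter.atTop := by
  intro β hβ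
  have hsum := summable_backward_orbit_rpow hα hγ hx0 hx
  set C := ∑' k, x (k + 1) ^ γ
  have hbirkhoff : ∀ n, 1 ≤ n → -(1 + C) ≤ ∑ j ∈ Finset.range n, -(((MP α)^[j] (y n)) ^ γ) := by
    intro n hn
    obtain ⟨m, rfl⟩ : ∃ m, n = m + 1 := ⟨n - 1, by omega⟩
    obtain ⟨⟨hxy, hy1⟩, hfy⟩ := hy (m + 1) hn
    rw [Nat.add_sub_cancel] at hfy
    rw [birkhoff_sum_eq_of_backward_orbit (fun k => (hx k).2) hfy fun z => -(z ^ γ), Finset.sum_neg_distrib]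
    have hyγ : y (m + 1) ^ γ ≤ 1 := rpow_le_one (hx₁.1.trans hxy).le hy1 (hα.trans hγ).le
    have htail : ∑ k ∈ Finset.range m, x (k + 1) ^ γ ≤ C :=
      hsum.sum_le_tsum _ fun k _ => rpow_nonneg (hx k).1.1.le _
    linarith
  exact tendsto_sum_Icc_atTop_of_le (exp_pos (β * -(1 + C))) fun n hn =>
    exp_le_exp.2 (mul_le_mul_of_nonneg_left (hbirkhoff n hn) hβ.le)

/-- For `γ > α` and every `β > 0`, the series
`Σ_{n ≥ 1} exp(β S_n ω_γ(y_n))` (with `ω_γ(x) = -x^γ`) diverges to `+∞`. -/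
theorem stmt13 (α γ : ℝ) (hα : 0 < α) (hγ : α < γ)
    (x₁ : ℝ) (hx₁ : x₁ ∈ Set.Ioo (0:ℝ) 1) (hfix : x₁ * (1 + x₁ ^ α) = 1)
    (x : ℕ → ℝ) (hx0 : x 0 = 1)
    (hx : ∀ n, x (n+1) ∈ Set.Ioo (0:ℝ) (x n) ∧ MP α (x (n+1)) = x n)
    (y : ℕ → ℝ)
    (hy : ∀ n : ℕ, 1 ≤ n → y n ∈ Set.Ioc x₁ 1 ∧ MP α (y n) = x (n-1)) :
    ∀ β > (0:ℝ),
      Filter.Tendsto (fun N : ℕ => ∑ n ∈ Finset.Icc 1 N,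
          Real.exp (β * ∑ j ∈ Finset.range n, (-(((MP α)^[j] (y n)) ^ γ))))
        Filter.atTop Filter.atTop :=
  stmt13_general α γ hα hγ x₁ hx₁ x hx0 hx y hy
end
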